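/- arXiv:1508.01794 — 7 statements merged into one kernel-verified Lean document; each statement's English description precedes it below -/
import Mathlib

section
/- Let (p_n) satisfy p_0 = 1, p_1(λ) = √2·λ + √2 and the recurrence p_{n-2} - √2·λ·p_{n-1} - 2λ·p_n - √2·λ·p_{n+1} + p_{n+2} = 0 (with p_{-1} = p_{-2} = 0). Then for every n, p_n is a polynomial of degree n with positive leading coefficient. -/
open Real Polynomial

private lemma aux_deg_le (c : ℝ) (g : Polynomial ℝ) (m : ℕ) (hg : g.degree = m) :
    (C c * X * g).degree ≤ ((m + 1 : ℕ) : WithBot ℕ) := by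
  calc (C c * X * g).degree ≤ (C c * X).degree + g.degree := degree_mul_le _ _
    _ ≤ 1 + (m : WithBot ℕ) := by
        rw [hg]
        gcongr
        calc (C c * X).degree ≤ (C c).degree + X.degree := degree_mul_le _ _
          _ ≤ 0 + 1 := by gcongr <;> simp [degree_C_le]
          _ = 1 := by norm_num
    _ = ((m + 1 : ℕ) : WithBot ℕ) := by push_cast; ring

private lemma aux_dom (f r : Polynomial ℝ) (m : ℕ)
    (hdf : f.degree = m) (hlf : 0 < f.leadingCoeff)
    (hr : r.degree ≤ (m : WithBot ℕ)) :
    (r + C (Real.sqrt 2) * X * f).degree = ((m + 1 : ℕ) : WithBot ℕ) ∧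
    0 < (r + C (Real.sqrt 2) * X * f).leadingCoeff := by
  have hs : (0:ℝ) < Real.sqrt 2 := by positivity
  have hq : (C (Real.sqrt 2) * X * f).degree = ((m + 1 : ℕ) : WithBot ℕ) := by
    rw [degree_mul, degree_mul, degree_C hs.ne', degree_X, hdf]
    push_cast; ring
  have hlt : r.degree < (C (Real.sqrt 2) * X * f).degree := by
    rw [hq]
    exact lt_of_le_of_lt hr (by exact_mod_cast Nat.lt_succ_self m)
  refine ⟨?_, ?_⟩
  · rw [degree_add_eq_right_of_degree_lt hlt, hq]
  · rw [leadingCoeff_add_of_degree_lt hlt, leadingCoeff_mul, leadingCoeff_mul,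
      leadingCoeff_C, leadingCoeff_X]
    have := hlf
    positivity

theorem p_degree_and_leadingCoeff
    (p : ℕ → Polynomial ℝ)
    (hp0 : p 0 = 1)
    (hp1 : p 1 = C (Real.sqrt 2) * X + C (Real.sqrt 2))
    (hrec0 : -(2 * X * p 0) - C (Real.sqrt 2) * X * p 1 + p 2 = 0)
    (hrec1 : -(C (Real.sqrt 2) * X * p 0) - 2 * X * p 1 - C (Real.sqrt 2) * X * p 2 + p 3 = 0)
    (hrec : ∀ n : ℕ, p n - C (Real.sqrt 2) * X * p (n+1) - 2 * X * p (n+2)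
      - C (Real.sqrt 2) * X * p (n+3) + p (n+4) = 0) :
    ∀ n : ℕ, (p n).degree = n ∧ 0 < (p n).leadingCoeff := by
  have h2C : (2 : Polynomial ℝ) = C 2 := (map_ofNat C 2).symm
  have P0 : (p 0).degree = (0:ℕ) ∧ 0 < (p 0).leadingCoeff := by
    rw [hp0]; simp
  have P1 : (p 1).degree = (1:ℕ) ∧ 0 < (p 1).leadingCoeff := by
    have e : p 1 = C (Real.sqrt 2) + C (Real.sqrt 2) * X * p 0 := by
      rw [hp0, hp1]; ring
    rw [e]
    exact aux_dom (p 0) _ 0 P0.1 P0.2 (by exact degree_C_le)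
  have P2 : (p 2).degree = (2:ℕ) ∧ 0 < (p 2).leadingCoeff := by
    have e : p 2 = 2 * X * p 0 + C (Real.sqrt 2) * X * p 1 := by
      linear_combination hrec0
    rw [e]
    refine aux_dom (p 1) _ 1 P1.1 P1.2 ?_
    rw [h2C]
    exact aux_deg_le 2 (p 0) 0 P0.1
  have P3 : (p 3).degree = (3:ℕ) ∧ 0 < (p 3).leadingCoeff := by
    have e : p 3 = (C (Real.sqrt 2) * X * p 0 + 2 * X * p 1) + C (Real.sqrt 2) * X * p 2 := by
      linear_combination hrec1
    rw [e]
    refine aux_dom (p 2) _ 2 P2.1 P2.2 ?_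
    refine (degree_add_le _ _).trans (max_le ?_ ?_)
    · exact (aux_deg_le _ (p 0) 0 P0.1).trans (by norm_num)
    · rw [h2C]; exact aux_deg_le 2 (p 1) 1 P1.1
  have key : ∀ n : ℕ,
      ((p n).degree = n ∧ 0 < (p n).leadingCoeff) ∧
      ((p (n+1)).degree = (n+1:ℕ) ∧ 0 < (p (n+1)).leadingCoeff) ∧
      ((p (n+2)).degree = (n+2:ℕ) ∧ 0 < (p (n+2)).leadingCoeff) ∧
      ((p (n+3)).degree = (n+3:ℕ) ∧ 0 < (p (n+3)).leadingCoeff) := by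
    intro n
    induction n with
    | zero => exact ⟨P0, P1, P2, P3⟩
    | succ k ih =>
      obtain ⟨h0, h1, h2, h3⟩ := ih
      refine ⟨h1, h2, h3, ?_⟩
      have e : p (k+4) = (2 * X * p (k+2) + C (Real.sqrt 2) * X * p (k+1) - p k)
          + C (Real.sqrt 2) * X * p (k+3) := by
        linear_combination hrec k
      have goal4 : (p (k+4)).degree = ((k+3+1:ℕ) : WithBot ℕ) ∧ 0 < (p (k+4)).leadingCoeff := by
        rw [e]
        refine aux_dom (p (k+3)) _ (k+3) h3.1 h3.2 ?_
        refine (degree_sub_le _ _).trans (max_le ((degree_add_le _ _).trans (max_le ?_ ?_)) ?_)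
        · rw [h2C]; exact aux_deg_le 2 (p (k+2)) (k+2) h2.1
        · exact (aux_deg_le _ (p (k+1)) (k+1) h1.1).trans (by exact_mod_cast (by omega : k+1+1 ≤ k+3))
        · rw [h0.1]; exact_mod_cast (Nat.le_add_right k 3)
      refine ⟨?_, goal4.2⟩
      have := goal4.1
      norm_num at this ⊢
      exact_mod_cast this
  exact fun n => (key n).1
end

section
/- For every t ∈ (-1, -1/√2) ∪ (-1/√2, 1) and every n ≥ 0, the polynomials (p_n) associated to the pencil Θ₁ satisfy p_n(√2·t - 1) = T_n(t) + t·U_{n-1}(t) - (1/2)·(U_{n-1}(t) - U_{n-1}(-1/√2))/(t + 1/√2), where T_n and U_n are the Chebyshev polynomials of the first and second kind and U_{-1} = 0. -/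
/-!
With `x = √2 t - 1` the characteristic polynomial of the recurrence factors as
`z⁴ - √2 x z³ - 2 x z² - √2 x z + 1 = (z² - 2 t z + 1) (z² + √2 z + 1)`.
The right-hand side `q_n` of the claimed identity, read for all `n ∈ ℤ`, satisfies
`q_{n+2} - 2 t q_{n+1} + q_n = -U_n(-1/√2)`, and `n ↦ U_n(-1/√2)` is annihilated by the
second factor, so `q` satisfies the four-term recurrence of `p`. Moreover `q_{-2} = q_{-1} = 0`,
`q_0 = 1` and `q_1 = 2 t = √2 x + √2`, which are exactly the initial conditions of `p`.
-/

open Real Polynomial Polynomial.Chebyshev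

section Recurrence

variable {R : Type*} [CommRing R]

/-- `(S² + s S + 1) (S² - 2 t S + 1)` annihilates `a`, where `S` is the shift. -/
theorem add_four_eq_of_add_two_eq {a b : ℤ → R} {s t : R}
    (ha : ∀ m, a (m + 2) = 2 * t * a (m + 1) - a m - b m)
    (hb : ∀ m, b (m + 2) + s * b (m + 1) + b m = 0) (m : ℤ) :
    a (m + 4) = (2 * t - s) * a (m + 3) + (2 * s * t - 2) * a (m + 2)
      + (2 * t - s) * a (m + 1) - a m := by
  have h1 := ha (m + 1)
  have h2 := ha (m + 2)
  rw [show m + 1 + 2 = m + 3 by ring, show m + 1 + 1 = m + 2 by ring] at h1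
  rw [show m + 2 + 2 = m + 4 by ring, show m + 2 + 1 = m + 3 by ring] at h2
  linear_combination h2 + s * h1 + ha m - hb m

theorem eq_of_four_term_recurrence {u : ℕ → R} {v : ℤ → R} {α β γ : R}
    (hu2 : u 2 = α * u 1 + β * u 0) (hu3 : u 3 = α * u 2 + β * u 1 + γ * u 0)
    (hu : ∀ n, u (n + 4) = α * u (n + 3) + β * u (n + 2) + γ * u (n + 1) - u n)
    (hv : ∀ m, v (m + 4) = α * v (m + 3) + β * v (m + 2) + γ * v (m + 1) - v m)
    (hv_neg_two : v (-2) = 0) (hv_neg_one : v (-1) = 0) (h0 : u 0 = v 0) (h1 : u 1 = v 1) :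
    ∀ n : ℕ, u n = v n := by
  intro n
  induction n using Nat.strong_induction_on with
  | _ n ih =>
    match n with
    | 0 => exact h0
    | 1 => exact h1
    | 2 => simpa [hu2, h0, h1, hv_neg_two, hv_neg_one] using (hv (-2)).symm
    | 3 => simpa [hu3, h0, h1, ih 2, hv_neg_one] using (hv (-1)).symm
    | n + 4 =>
      rw [hu, ih n (by omega), ih (n + 1) (by omega), ih (n + 2) (by omega),
        ih (n + 3) (by omega)]
      push_cast
      exact (hv n).symm

end Recurrence

section ChebyshevForm

variable {K : Type*} [Field K]

/-- The right-hand side of the representation of `p_n`, with `-1/√2` replaced by `c`. -/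
noncomputable def chebyshevForm (c t : K) (n : ℤ) : K :=
  (T K n).eval t + t * (U K (n - 1)).eval t
    - 1 / 2 * ((U K (n - 1)).eval t - (U K (n - 1)).eval c) / (t - c)

variable {c t : K}

theorem chebyshevForm_add_two [NeZero (2 : K)] (hct : t ≠ c) (m : ℤ) :
    chebyshevForm c t (m + 2) =
      2 * t * chebyshevForm c t (m + 1) - chebyshevForm c t m - (U K m).eval c := by
  have htc : t - c ≠ 0 := sub_ne_zero.mpr hct
  have hU (x : K) : (U K (m + 1)).eval x = 2 * x * (U K m).eval x - (U K (m - 1)).eval x := by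
    simp [U_add_one]
  simp only [chebyshevForm, T_add_two, eval_sub, eval_mul, eval_ofNat, eval_X,
    show m + 2 - 1 = m + 1 by ring, add_sub_cancel_right, hU]
  field_simp
  ring

theorem chebyshevForm_neg_two [NeZero (2 : K)] (hct : t ≠ c) : chebyshevForm c t (-2) = 0 := by
  have htc : t - c ≠ 0 := sub_ne_zero.mpr hct
  have hU : U K (-3) = -(2 * X) := by simpa [U_one] using U_neg K 3
  simp only [chebyshevForm, show (-2 : ℤ) - 1 = -3 by norm_num, hU, T_neg, T_two, eval_sub,
    eval_mul, eval_ofNat, eval_pow, eval_X, eval_one, eval_neg]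
  field_simp
  ring

theorem chebyshevForm_neg_one : chebyshevForm c t (-1) = 0 := by
  simp [chebyshevForm, show (-1 : ℤ) - 1 = -2 by norm_num, U_neg_two]

theorem chebyshevForm_zero : chebyshevForm c t 0 = 1 := by
  simp [chebyshevForm, U_neg_one]

theorem chebyshevForm_one : chebyshevForm c t 1 = 2 * t := by
  simp [chebyshevForm, two_mul]

end ChebyshevForm

theorem U_eval_neg_inv_sqrt_two_add_two (m : ℤ) :
    (U ℝ (m + 2)).eval (-(1 / √2)) + √2 * (U ℝ (m + 1)).eval (-(1 / √2))
      + (U ℝ m).eval (-(1 / √2)) = 0 := by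
  have h : 2 * -(1 / √2) = -√2 := by
    field_simp
    simp
  simp only [U_add_two, eval_sub, eval_mul, eval_ofNat, eval_X, h]
  ring

theorem p_chebyshev_representation
    (p : ℕ → ℝ → ℝ)
    (hp0 : ∀ x : ℝ, p 0 x = 1)
    (hp1 : ∀ x : ℝ, p 1 x = Real.sqrt 2 * x + Real.sqrt 2)
    (hrec0 : ∀ x : ℝ, -(2 * x * p 0 x) - Real.sqrt 2 * x * p 1 x + p 2 x = 0)
    (hrec1 : ∀ x : ℝ, -(Real.sqrt 2 * x * p 0 x) - 2 * x * p 1 x - Real.sqrt 2 * x * p 2 x + p 3 x = 0)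
    (hrec : ∀ (n : ℕ) (x : ℝ), p n x - Real.sqrt 2 * x * p (n+1) x - 2 * x * p (n+2) x
      - Real.sqrt 2 * x * p (n+3) x + p (n+4) x = 0) :
    ∀ t : ℝ, (t ∈ Set.Ioo (-1 : ℝ) (-(1 / Real.sqrt 2)) ∪ Set.Ioo (-(1 / Real.sqrt 2)) 1) →
      ∀ n : ℕ,
        p n (Real.sqrt 2 * t - 1) =
          (Polynomial.Chebyshev.T ℝ n).eval t + t * (Polynomial.Chebyshev.U ℝ ((n : ℤ) - 1)).eval t
            - (1 / 2) * ((Polynomial.Chebyshev.U ℝ ((n : ℤ) - 1)).eval t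
                - (Polynomial.Chebyshev.U ℝ ((n : ℤ) - 1)).eval (-(1 / Real.sqrt 2)))
              / (t + 1 / Real.sqrt 2) := by
  intro t ht n
  have hct : t ≠ -(1 / √2) := by
    rcases ht with ⟨-, h⟩ | ⟨h, -⟩
    exacts [h.ne, h.ne']
  set x := √2 * t - 1
  have hs : √2 * √2 = 2 := mul_self_sqrt zero_le_two
  have hα : √2 * x = 2 * t - √2 := by linear_combination t * hs
  have hβ : 2 * x = 2 * √2 * t - 2 := by ring
  have hform (m : ℤ) := add_four_eq_of_add_two_eq (chebyshevForm_add_two hct)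
    U_eval_neg_inv_sqrt_two_add_two m
  have key := eq_of_four_term_recurrence (u := fun n => p n x)
    (α := √2 * x) (β := 2 * x) (γ := √2 * x)
    (by linear_combination hrec0 x) (by linear_combination hrec1 x)
    (fun n => by linear_combination hrec n x) (by rw [hα, hβ]; exact hform)
    (chebyshevForm_neg_two hct) chebyshevForm_neg_one
    (by rw [hp0, chebyshevForm_zero]) (by rw [hp1, chebyshevForm_one, hα]; ring)
  rw [key n, chebyshevForm, sub_neg_eq_add]
end

section
/- For λ ∈ ℂ \ {-2, -1+√2, -1-√2} and s a fixed square root of λ^2+2λ-1, the associated polynomials of Θ₁ satisfy p_n(λ) = (1/(λ+2))·sin(3πn/4) + 2^{-n/2-1}·[(λ+1+s)^n + (λ+1-s)^n + ((λ^2+3λ+1)/((λ+2)s))·((λ+1+s)^n - (λ+1-s)^n)] for all n ≥ 0. -/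
/-!
The recurrence has characteristic polynomial
`X⁴ - √2 λ X³ - 2 λ X² - √2 λ X + 1 = (X² + √2 X + 1) (X² - √2 (λ + 1) X + 1)`.
The roots `e^{± 3πi/4}` of the first factor contribute the multiple of `sin (3πn/4)`, the roots
`(λ + 1 ± s) / √2` of the second one (distinct because `s ≠ 0`) the powers of `λ + 1 ± s`.
So both sides of the identity solve the same recurrence of order four, and it remains to
compare them for `n = 0, 1, 2, 3`.
-/

open Real Complex

namespace LinearRecurrence

variable {R : Type*} [CommRing R]

/-- The recurrence whose characteristic polynomial is `(X² - c X + 1) (X² - d X + 1)`. -/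
def ofQuadraticFactors (c d : R) : LinearRecurrence R :=
  ⟨4, ![-1, c + d, -(2 + c * d), c + d]⟩

theorem isSolution_ofQuadraticFactors_iff {c d : R} {u : ℕ → R} :
    (ofQuadraticFactors c d).IsSolution u ↔ ∀ n, u (n + 4) =
      (c + d) * u (n + 3) - (2 + c * d) * u (n + 2) + (c + d) * u (n + 1) - u n := by
  refine forall_congr' fun n ↦ ?_
  change u (n + 4) = ∑ i : Fin 4, ![-1, c + d, -(2 + c * d), c + d] i * u (n + i) ↔ _
  simp only [Fin.sum_univ_four, Matrix.cons_val, Fin.val_zero, Fin.val_one, Fin.val_two, add_zero]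
  rw [show ((3 : Fin 4) : ℕ) = 3 from rfl]
  constructor <;> intro h <;> linear_combination h

theorem ofQuadraticFactors_comm (c d : R) : ofQuadraticFactors c d = ofQuadraticFactors d c := by
  simp only [ofQuadraticFactors, add_comm c, mul_comm c]

theorem isSolution_ofQuadraticFactors_left {c d : R} {u : ℕ → R}
    (hu : ∀ n, u (n + 2) = c * u (n + 1) - u n) : (ofQuadraticFactors c d).IsSolution u :=
  isSolution_ofQuadraticFactors_iff.2 fun n ↦ by
    linear_combination hu (n + 2) - d * hu (n + 1) + hu n

theorem isSolution_ofQuadraticFactors_add {c d : R} {u v : ℕ → R}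
    (hu : ∀ n, u (n + 2) = c * u (n + 1) - u n) (hv : ∀ n, v (n + 2) = d * v (n + 1) - v n) :
    (ofQuadraticFactors c d).IsSolution (u + v) := by
  rw [is_sol_iff_mem_solSpace]
  refine add_mem ((is_sol_iff_mem_solSpace _ _).1 (isSolution_ofQuadraticFactors_left hu)) ?_
  rw [ofQuadraticFactors_comm, ← is_sol_iff_mem_solSpace]
  exact isSolution_ofQuadraticFactors_left hv

end LinearRecurrence

open LinearRecurrence

theorem pow_add_two_of_sq_eq {R : Type*} [CommRing R] {x c : R} (hx : x ^ 2 = c * x - 1)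
    (n : ℕ) : x ^ (n + 2) = c * x ^ (n + 1) - x ^ n := by
  linear_combination x ^ n * hx

theorem Real.sin_add_two_mul (x h : ℝ) : sin (x + 2 * h) = 2 * cos h * sin (x + h) - sin x := by
  have := two_mul_sin_mul_cos (x + h) h
  rw [add_sub_cancel_right, add_assoc, ← two_mul] at this
  linarith

theorem Real.two_rpow_neg_half_sub_one (n : ℕ) :
    (2 : ℝ) ^ (-(n : ℝ) / 2 - 1) = (√2 ^ n)⁻¹ / 2 := by
  rw [rpow_sub two_pos, rpow_one, neg_div, rpow_neg zero_le_two,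
    show (n : ℝ) / 2 = 1 / 2 * n by ring, rpow_mul zero_le_two, ← sqrt_eq_rpow, rpow_natCast]

theorem Complex.ofReal_sqrt_two_sq : (√2 : ℂ) ^ 2 = 2 := by
  exact_mod_cast Real.sq_sqrt zero_le_two

noncomputable def sinPart (n : ℕ) : ℂ := Real.sin (3 * π * n / 4)

theorem sinPart_zero : sinPart 0 = 0 := by simp [sinPart]

theorem sinPart_one : sinPart 1 = √2 / 2 := by
  rw [sinPart, Nat.cast_one, mul_one, show 3 * π / 4 = π - π / 4 by ring, Real.sin_pi_sub,
    sin_pi_div_four, ofReal_div, ofReal_ofNat]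

theorem sinPart_add_two (n : ℕ) : sinPart (n + 2) = -√2 * sinPart (n + 1) - sinPart n := by
  have hcos : Real.cos (3 * π / 4) = -(√2 / 2) := by
    rw [show 3 * π / 4 = π - π / 4 by ring, Real.cos_pi_sub, cos_pi_div_four]
  have : Real.sin (3 * π * ↑(n + 2) / 4) =
      -√2 * Real.sin (3 * π * ↑(n + 1) / 4) - Real.sin (3 * π * n / 4) := by
    push_cast
    rw [show 3 * π * (n + 2) / 4 = 3 * π * n / 4 + 2 * (3 * π / 4) by ring,
      show 3 * π * (n + 1) / 4 = 3 * π * n / 4 + 3 * π / 4 by ring, Real.sin_add_two_mul, hcos]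
    ring
  simp only [sinPart]
  exact_mod_cast this

theorem add_div_sqrt_two_sq {l s : ℂ} (hs : s ^ 2 = l ^ 2 + 2 * l - 1) :
    ((l + 1 + s) / √2) ^ 2 = √2 * (l + 1) * ((l + 1 + s) / √2) - 1 := by
  rw [div_pow, ofReal_sqrt_two_sq, mul_comm (√2 : ℂ), mul_assoc,
    mul_div_cancel₀ _ (by norm_num)]
  linear_combination hs / 2

noncomputable def rootPart (l s : ℂ) (n : ℕ) : ℂ :=
  ((l + 1 + s) ^ n + (l + 1 - s) ^ n
    + (l ^ 2 + 3 * l + 1) / ((l + 2) * s) * ((l + 1 + s) ^ n - (l + 1 - s) ^ n)) / (2 * √2 ^ n)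

theorem rootPart_eq_add_pow (l s : ℂ) (n : ℕ) : rootPart l s n =
    ((1 + (l ^ 2 + 3 * l + 1) / ((l + 2) * s)) * ((l + 1 + s) / √2) ^ n
      + (1 - (l ^ 2 + 3 * l + 1) / ((l + 2) * s)) * ((l + 1 - s) / √2) ^ n) / 2 := by
  rw [rootPart, div_pow, div_pow]
  ring

theorem rootPart_zero (l s : ℂ) : rootPart l s 0 = 1 := by
  norm_num [rootPart]

theorem sqrt_two_mul_rootPart_one {l s : ℂ} (hl : l + 2 ≠ 0) (hs : s ≠ 0) :
    √2 * rootPart l s 1 = l + 1 + (l ^ 2 + 3 * l + 1) / (l + 2) := by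
  have ht0 : (√2 : ℂ) ≠ 0 := by norm_num
  rw [rootPart]
  field_simp
  ring

theorem rootPart_add_two {l s : ℂ} (hs : s ^ 2 = l ^ 2 + 2 * l - 1) (n : ℕ) :
    rootPart l s (n + 2) = √2 * (l + 1) * rootPart l s (n + 1) - rootPart l s n := by
  have ha := pow_add_two_of_sq_eq (add_div_sqrt_two_sq hs) n
  have hb := pow_add_two_of_sq_eq (add_div_sqrt_two_sq (l := l) (s := -s) (by rw [neg_sq, hs])) n
  simp only [rootPart_eq_add_pow, ← sub_eq_add_neg] at hb ⊢
  linear_combination (1 + (l ^ 2 + 3 * l + 1) / ((l + 2) * s)) / 2 * ha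
    + (1 - (l ^ 2 + 3 * l + 1) / ((l + 2) * s)) / 2 * hb

theorem ne_zero_of_sq_eq_sq_add_two_mul_sub_one {l s : ℂ} (hl₁ : l ≠ -1 + √2)
    (hl₂ : l ≠ -1 - √2) (hs : s ^ 2 = l ^ 2 + 2 * l - 1) : s ≠ 0 := by
  rintro rfl
  have : (l + 1 - √2) * (l + 1 + √2) = 0 := by linear_combination -hs - ofReal_sqrt_two_sq
  rcases mul_eq_zero.1 this with h | h
  exacts [hl₁ (by linear_combination h), hl₂ (by linear_combination h)]

theorem p_explicit_representation
    (p : ℕ → ℂ → ℂ)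
    (hp0 : ∀ z : ℂ, p 0 z = 1)
    (hp1 : ∀ z : ℂ, p 1 z = (Real.sqrt 2 : ℂ) * z + (Real.sqrt 2 : ℂ))
    (hrec0 : ∀ z : ℂ, -(2 * z * p 0 z) - (Real.sqrt 2 : ℂ) * z * p 1 z + p 2 z = 0)
    (hrec1 : ∀ z : ℂ, -((Real.sqrt 2 : ℂ) * z * p 0 z) - 2 * z * p 1 z
      - (Real.sqrt 2 : ℂ) * z * p 2 z + p 3 z = 0)
    (hrec : ∀ (n : ℕ) (z : ℂ), p n z - (Real.sqrt 2 : ℂ) * z * p (n+1) z - 2 * z * p (n+2) z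
      - (Real.sqrt 2 : ℂ) * z * p (n+3) z + p (n+4) z = 0)
    (l s : ℂ)
    (hl2 : l ≠ -2)
    (hl3 : l ≠ -1 + (Real.sqrt 2 : ℂ))
    (hl4 : l ≠ -1 - (Real.sqrt 2 : ℂ))
    (hs : s ^ 2 = l ^ 2 + 2 * l - 1) :
    ∀ n : ℕ,
      p n l = (1 / (l + 2)) * (Real.sin (3 * Real.pi * n / 4) : ℂ)
        + (((2 : ℝ) ^ (-(n : ℝ) / 2 - 1) : ℝ) : ℂ) *
          ((l + 1 + s) ^ n + (l + 1 - s) ^ n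
            + ((l ^ 2 + 3 * l + 1) / ((l + 2) * s)) * ((l + 1 + s) ^ n - (l + 1 - s) ^ n)) := by
  have hl : l + 2 ≠ 0 := fun h ↦ hl2 (eq_neg_of_add_eq_zero_left h)
  have hs0 : s ≠ 0 := ne_zero_of_sq_eq_sq_add_two_mul_sub_one hl3 hl4 hs
  set E := ofQuadraticFactors (-√2 : ℂ) (√2 * (l + 1))
  have hp : E.IsSolution (p · l) := isSolution_ofQuadraticFactors_iff.2 fun n ↦ by
    linear_combination hrec n l - (l + 1) * p (n + 2) l * ofReal_sqrt_two_sq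
  have hq : E.IsSolution ((sinPart · / (l + 2)) + rootPart l s) :=
    isSolution_ofQuadraticFactors_add (fun n ↦ by rw [sinPart_add_two]; ring)
      (rootPart_add_two hs)
  have hinit : Set.EqOn (p · l) ((sinPart · / (l + 2)) + rootPart l s) (Finset.range 4) := by
    intro k hk
    simp only [Finset.coe_range, Set.mem_Iio] at hk
    show p k l = sinPart k / (l + 2) + rootPart l s k
    have hsin : _ ∧ _ ∧ _ ∧ _ :=
      ⟨sinPart_zero, sinPart_one, sinPart_add_two 0, sinPart_add_two 1⟩
    have hroot : _ ∧ _ ∧ _ ∧ _ := ⟨rootPart_zero l s, sqrt_two_mul_rootPart_one hl hs0,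
      rootPart_add_two hs 0, rootPart_add_two hs 1⟩
    have hpl : _ ∧ _ ∧ _ ∧ _ := ⟨hp0 l, hp1 l, hrec0 l, hrec1 l⟩
    have hsqrt := ofReal_sqrt_two_sq
    interval_cases k <;> grind
  intro n
  rw [congr_fun ((E.eq_iff_eqOn_range_order _ _ hp hq).2 hinit) n, Pi.add_apply, rootPart,
    two_rpow_neg_half_sub_one, sinPart]
  push_cast
  ring
end

section
/- Let Θ = (J₃, J₅, α, β) be a Jacobi-type pencil with bounded entries, A its associated operator on l_{2,fin}, and (p_n) the associated polynomials. Then p_n(A)·e₀ = e_n for all n ≥ 0, where (e_n) is the standard basis of l₂. -/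
open Polynomial

/-- The standard basis vectors of `l_{2,fin}`, modeled as finitely supported sequences. -/
noncomputable def e (n : ℕ) : ℕ →₀ ℂ := Finsupp.single n 1

theorem p_of_A_eq_basis
    (a b al be ga : ℕ → ℝ) (α β : ℝ)
    (ha : ∀ n, 0 < a n) (hga : ∀ n, 0 < ga n) (hα : 0 < α)
    (J3 J5 A : (ℕ →₀ ℂ) →ₗ[ℂ] (ℕ →₀ ℂ))
    (hJ3_0 : J3 (e 0) = (b 0 : ℂ) • e 0 + (a 0 : ℂ) • e 1)
    (hJ3 : ∀ n, J3 (e (n+1)) = (a n : ℂ) • e n + (b (n+1) : ℂ) • e (n+1) + (a (n+1) : ℂ) • e (n+2))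
    (hJ5_0 : J5 (e 0) = (al 0 : ℂ) • e 0 + (be 0 : ℂ) • e 1 + (ga 0 : ℂ) • e 2)
    (hJ5_1 : J5 (e 1) = (be 0 : ℂ) • e 0 + (al 1 : ℂ) • e 1 + (be 1 : ℂ) • e 2 + (ga 1 : ℂ) • e 3)
    (hJ5 : ∀ n, J5 (e (n+2)) = (ga n : ℂ) • e n + (be (n+1) : ℂ) • e (n+1)
      + (al (n+2) : ℂ) • e (n+2) + (be (n+2) : ℂ) • e (n+3) + (ga (n+2) : ℂ) • e (n+4))
    (hA0 : A (e 0) = (α : ℂ)⁻¹ • (e 1 - (β : ℂ) • e 0))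
    (hA : ∀ n, A (J3 (e n)) = J5 (e n))
    (p : ℕ → Polynomial ℂ)
    (hp0 : p 0 = 1) (hp1 : p 1 = C (α : ℂ) * X + C (β : ℂ))
    (hrec0 : (C (al 0 : ℂ) - C (b 0 : ℂ) * X) * p 0 + (C (be 0 : ℂ) - C (a 0 : ℂ) * X) * p 1
      + C (ga 0 : ℂ) * p 2 = 0)
    (hrec1 : (C (be 0 : ℂ) - C (a 0 : ℂ) * X) * p 0 + (C (al 1 : ℂ) - C (b 1 : ℂ) * X) * p 1
      + (C (be 1 : ℂ) - C (a 1 : ℂ) * X) * p 2 + C (ga 1 : ℂ) * p 3 = 0)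
    (hrec : ∀ n, C (ga n : ℂ) * p n + (C (be (n+1) : ℂ) - C (a (n+1) : ℂ) * X) * p (n+1)
      + (C (al (n+2) : ℂ) - C (b (n+2) : ℂ) * X) * p (n+2)
      + (C (be (n+2) : ℂ) - C (a (n+2) : ℂ) * X) * p (n+3) + C (ga (n+2) : ℂ) * p (n+4) = 0)
    :
    ∀ n, (aeval A (p n)) (e 0) = e n := by
  have hα' : (α : ℂ) ≠ 0 := by exact_mod_cast hα.ne'
  have h0 : (aeval A (p 0)) (e 0) = e 0 := by simp [hp0]
  have h1 : (aeval A (p 1)) (e 0) = e 1 := by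
    rw [hp1]
    simp [hA0, Module.algebraMap_end_apply, Module.End.mul_apply, smul_smul,
      mul_inv_cancel₀ hα', smul_sub]
  have h2 : (aeval A (p 2)) (e 0) = e 2 := by
    have K : (b 0 : ℂ) • A (e 0) + (a 0 : ℂ) • A (e 1)
        = (al 0 : ℂ) • e 0 + (be 0 : ℂ) • e 1 + (ga 0 : ℂ) • e 2 := by
      have h := hA 0
      rw [hJ3_0, hJ5_0, map_add, map_smul, map_smul] at h
      exact h
    have E := congrArg (fun q => (aeval A q) (e 0)) hrec0
    simp only [map_add, map_mul, map_sub, aeval_C, aeval_X, LinearMap.add_apply,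
      LinearMap.sub_apply, Module.End.mul_apply, Module.algebraMap_end_apply,
      map_zero, LinearMap.zero_apply, h0, h1] at E
    have hg : (ga 0 : ℂ) ≠ 0 := by exact_mod_cast (hga 0).ne'
    apply smul_right_injective (ℕ →₀ ℂ) hg
    linear_combination (norm := module) E + K
  have h3 : (aeval A (p 3)) (e 0) = e 3 := by
    have K : (a 0 : ℂ) • A (e 0) + (b 1 : ℂ) • A (e 1) + (a 1 : ℂ) • A (e 2)
        = (be 0 : ℂ) • e 0 + (al 1 : ℂ) • e 1 + (be 1 : ℂ) • e 2 + (ga 1 : ℂ) • e 3 := by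
      have h := hA 1
      rw [show (1:ℕ) = 0 + 1 from rfl] at h
      rw [hJ3 0] at h
      rw [hJ5_1, map_add, map_add, map_smul, map_smul, map_smul] at h
      exact h
    have E := congrArg (fun q => (aeval A q) (e 0)) hrec1
    simp only [map_add, map_mul, map_sub, aeval_C, aeval_X, LinearMap.add_apply,
      LinearMap.sub_apply, Module.End.mul_apply, Module.algebraMap_end_apply,
      map_zero, LinearMap.zero_apply, h0, h1, h2] at E
    have hg : (ga 1 : ℂ) ≠ 0 := by exact_mod_cast (hga 1).ne'
    apply smul_right_injective (ℕ →₀ ℂ) hg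
    linear_combination (norm := module) E + K
  have main : ∀ n, (aeval A (p n)) (e 0) = e n ∧ (aeval A (p (n+1))) (e 0) = e (n+1)
      ∧ (aeval A (p (n+2))) (e 0) = e (n+2) ∧ (aeval A (p (n+3))) (e 0) = e (n+3) := by
    intro n
    induction n with
    | zero => exact ⟨h0, h1, h2, h3⟩
    | succ n ih =>
      obtain ⟨i0, i1, i2, i3⟩ := ih
      refine ⟨i1, i2, i3, ?_⟩
      have K : (a (n+1) : ℂ) • A (e (n+1)) + (b (n+2) : ℂ) • A (e (n+2))
          + (a (n+2) : ℂ) • A (e (n+3))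
          = (ga n : ℂ) • e n + (be (n+1) : ℂ) • e (n+1) + (al (n+2) : ℂ) • e (n+2)
            + (be (n+2) : ℂ) • e (n+3) + (ga (n+2) : ℂ) • e (n+4) := by
        have h := hA (n+2)
        rw [show n+2 = (n+1)+1 from rfl] at h
        rw [hJ3 (n+1)] at h
        rw [show (n+1)+1 = n+2 from rfl, show (n+1)+1+1 = n+3 from rfl] at h
        rw [hJ5 n, map_add, map_add, map_smul, map_smul, map_smul] at h
        exact h
      have E := congrArg (fun q => (aeval A q) (e 0)) (hrec n)
      simp only [map_add, map_mul, map_sub, aeval_C, aeval_X, LinearMap.add_apply,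
        LinearMap.sub_apply, Module.End.mul_apply, Module.algebraMap_end_apply,
        map_zero, LinearMap.zero_apply, i0, i1, i2, i3] at E
      have hg : (ga (n+2) : ℂ) ≠ 0 := by exact_mod_cast (hga (n+2)).ne'
      apply smul_right_injective (ℕ →₀ ℂ) hg
      linear_combination (norm := module) E + K
  exact fun n => (main n).1
end

section
/- With the notation of the associated operator A of a Jacobi-type pencil Θ and its associated polynomials (p_n), the orthonormality relation (p_n(A)e₀, p_m(A)e₀)_{l₂} = δ_{n,m} holds for all n, m ≥ 0. -/
open Polynomial

theorem orthonormality_relations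
    (a b al be ga : ℕ → ℝ) (α β : ℝ)
    (ha : ∀ n, 0 < a n) (hga : ∀ n, 0 < ga n) (hα : 0 < α)
    (J3 J5 A : (ℕ →₀ ℂ) →ₗ[ℂ] (ℕ →₀ ℂ))
    (hJ3_0 : J3 (e 0) = (b 0 : ℂ) • e 0 + (a 0 : ℂ) • e 1)
    (hJ3 : ∀ n, J3 (e (n+1)) = (a n : ℂ) • e n + (b (n+1) : ℂ) • e (n+1) + (a (n+1) : ℂ) • e (n+2))
    (hJ5_0 : J5 (e 0) = (al 0 : ℂ) • e 0 + (be 0 : ℂ) • e 1 + (ga 0 : ℂ) • e 2)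
    (hJ5_1 : J5 (e 1) = (be 0 : ℂ) • e 0 + (al 1 : ℂ) • e 1 + (be 1 : ℂ) • e 2 + (ga 1 : ℂ) • e 3)
    (hJ5 : ∀ n, J5 (e (n+2)) = (ga n : ℂ) • e n + (be (n+1) : ℂ) • e (n+1)
      + (al (n+2) : ℂ) • e (n+2) + (be (n+2) : ℂ) • e (n+3) + (ga (n+2) : ℂ) • e (n+4))
    (hA0 : A (e 0) = (α : ℂ)⁻¹ • (e 1 - (β : ℂ) • e 0))
    (hA : ∀ n, A (J3 (e n)) = J5 (e n))
    (p : ℕ → Polynomial ℂ)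
    (hp0 : p 0 = 1) (hp1 : p 1 = C (α : ℂ) * X + C (β : ℂ))
    (hrec0 : (C (al 0 : ℂ) - C (b 0 : ℂ) * X) * p 0 + (C (be 0 : ℂ) - C (a 0 : ℂ) * X) * p 1
      + C (ga 0 : ℂ) * p 2 = 0)
    (hrec1 : (C (be 0 : ℂ) - C (a 0 : ℂ) * X) * p 0 + (C (al 1 : ℂ) - C (b 1 : ℂ) * X) * p 1
      + (C (be 1 : ℂ) - C (a 1 : ℂ) * X) * p 2 + C (ga 1 : ℂ) * p 3 = 0)
    (hrec : ∀ n, C (ga n : ℂ) * p n + (C (be (n+1) : ℂ) - C (a (n+1) : ℂ) * X) * p (n+1)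
      + (C (al (n+2) : ℂ) - C (b (n+2) : ℂ) * X) * p (n+2)
      + (C (be (n+2) : ℂ) - C (a (n+2) : ℂ) * X) * p (n+3) + C (ga (n+2) : ℂ) * p (n+4) = 0)
    :
    ∀ n m : ℕ,
      (((aeval A (p n)) (e 0)).sum fun i c => c * (starRingEnd ℂ) (((aeval A (p m)) (e 0)) i))
        = if n = m then 1 else 0 := by

  have hga' : ∀ n, (ga n : ℂ) ≠ 0 := fun n => by
    exact_mod_cast (hga n).ne'
  have hα' : (α : ℂ) ≠ 0 := by exact_mod_cast hα.ne'
  have key : ∀ n, (aeval A (p n)) (e 0) = e n := by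
    intro n
    induction n using Nat.strong_induction_on with
    | _ n ih =>
      match n with
      | 0 => simp [hp0]
      | 1 =>
        simp only [hp1, map_add, map_mul, aeval_C, aeval_X, LinearMap.add_apply,
          Module.End.mul_apply, Module.algebraMap_end_apply, hA0, smul_smul,
          mul_inv_cancel₀ hα', one_smul]
        module
      | 2 =>
        have h := congrArg (fun q => (aeval A q) (e 0)) hrec0
        simp only [map_add, map_sub, map_mul, aeval_C, aeval_X, map_zero,
          LinearMap.add_apply, LinearMap.sub_apply, Module.End.mul_apply,
          Module.algebraMap_end_apply, LinearMap.zero_apply,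
          ih 0 (by norm_num), ih 1 (by norm_num)] at h
        have h2 := hA 0
        rw [hJ3_0, hJ5_0, map_add, map_smul, map_smul] at h2
        refine smul_right_injective _ (hga' 0) ?_
        linear_combination (norm := module) h + h2
      | 3 =>
        have h := congrArg (fun q => (aeval A q) (e 0)) hrec1
        simp only [map_add, map_sub, map_mul, aeval_C, aeval_X, map_zero,
          LinearMap.add_apply, LinearMap.sub_apply, Module.End.mul_apply,
          Module.algebraMap_end_apply, LinearMap.zero_apply,
          ih 0 (by norm_num), ih 1 (by norm_num), ih 2 (by norm_num)] at h
        have h2 := hA 1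
        rw [hJ3 0, hJ5_1, map_add, map_add, map_smul, map_smul, map_smul] at h2
        refine smul_right_injective _ (hga' 1) ?_
        linear_combination (norm := module) h + h2
      | (k+4) =>
        have h := congrArg (fun q => (aeval A q) (e 0)) (hrec k)
        simp only [map_add, map_sub, map_mul, aeval_C, aeval_X, map_zero,
          LinearMap.add_apply, LinearMap.sub_apply, Module.End.mul_apply,
          Module.algebraMap_end_apply, LinearMap.zero_apply,
          ih k (by omega), ih (k+1) (by omega), ih (k+2) (by omega), ih (k+3) (by omega)] at h
        have h2 := hA (k+2)
        rw [hJ3 (k+1), hJ5 k, map_add, map_add, map_smul, map_smul, map_smul] at h2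
        refine smul_right_injective _ (hga' (k+2)) ?_
        linear_combination (norm := module) h + h2
  intro n m
  rw [key n, key m]
  unfold e
  rw [Finsupp.sum_single_index (by simp)]
  rcases eq_or_ne n m with h | h
  · subst h; simp
  · simp [Finsupp.single_apply, Ne.symm h, h]
end

section
/- Let Θ be a Jacobi-type pencil. Then the five-term recurrence γ_{n-2}p_{n-2}(λ) + (β_{n-1} - λa_{n-1})p_{n-1}(λ) + (α_n - λb_n)p_n(λ) + (β_n - λa_n)p_{n+1}(λ) + γ_n p_{n+2}(λ) = 0 (n ≥ 0, with p_{-2} = p_{-1} = 0 and γ_{-2} = γ_{-1} = α_{-1} = β_{-1} = 0) together with the initial conditions p_0 = 1, p_1(λ) = αλ + β uniquely determines a sequence of polynomials in which p_n has degree n and positive leading coefficient. -/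
open Polynomial

/-- The conditions on the system of polynomials associated to a Jacobi-type pencil:
initial conditions `p 0 = 1`, `p 1 = α X + β`, and the five-term recurrence
(with `p_{-2} = p_{-1} = 0` and `γ_{-2} = γ_{-1} = α_{-1} = β_{-1} = 0`). -/
def PencilConds (a b al be ga : ℕ → ℝ) (α β : ℝ) (p : ℕ → Polynomial ℝ) : Prop :=
  p 0 = 1 ∧ p 1 = C α * X + C β ∧
  ((C (al 0) - C (b 0) * X) * p 0 + (C (be 0) - C (a 0) * X) * p 1 + C (ga 0) * p 2 = 0) ∧
  ((C (be 0) - C (a 0) * X) * p 0 + (C (al 1) - C (b 1) * X) * p 1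
    + (C (be 1) - C (a 1) * X) * p 2 + C (ga 1) * p 3 = 0) ∧
  (∀ n, C (ga n) * p n + (C (be (n+1)) - C (a (n+1)) * X) * p (n+1)
    + (C (al (n+2)) - C (b (n+2)) * X) * p (n+2)
    + (C (be (n+2)) - C (a (n+2)) * X) * p (n+3) + C (ga (n+2)) * p (n+4) = 0)

/-- The canonical solution sequence. -/
noncomputable def qseq (a b al be ga : ℕ → ℝ) (α β : ℝ) : ℕ → Polynomial ℝ
  | 0 => 1
  | 1 => C α * X + C β
  | 2 => C ((ga 0)⁻¹) * (-((C (al 0) - C (b 0) * X) * qseq a b al be ga α β 0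
        + (C (be 0) - C (a 0) * X) * qseq a b al be ga α β 1))
  | 3 => C ((ga 1)⁻¹) * (-((C (be 0) - C (a 0) * X) * qseq a b al be ga α β 0
        + (C (al 1) - C (b 1) * X) * qseq a b al be ga α β 1
        + (C (be 1) - C (a 1) * X) * qseq a b al be ga α β 2))
  | (n+4) => C ((ga (n+2))⁻¹) * (-(C (ga n) * qseq a b al be ga α β n
        + (C (be (n+1)) - C (a (n+1)) * X) * qseq a b al be ga α β (n+1)
        + (C (al (n+2)) - C (b (n+2)) * X) * qseq a b al be ga α β (n+2)
        + (C (be (n+2)) - C (a (n+2)) * X) * qseq a b al be ga α β (n+3)))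

lemma C_inv_cancel {g : ℝ} (hg : g ≠ 0) (R : Polynomial ℝ) :
    C g * (C (g⁻¹) * R) = R := by
  rw [← mul_assoc, ← C_mul, mul_inv_cancel₀ hg, C_1, one_mul]

lemma lin_deg_le (u v : ℝ) : (C u - C v * X : Polynomial ℝ).degree ≤ 1 := by
  have h : (C u - C v * X : Polynomial ℝ) = C (-v) * X + C u := by rw [map_neg]; ring
  rw [h]; exact degree_linear_le

lemma mul_lin_deg_le (u v : ℝ) (p : Polynomial ℝ) (k : ℕ) (hp : p.degree ≤ k) :
    ((C u - C v * X) * p).degree ≤ ((k + 1 : ℕ) : WithBot ℕ) := by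
  refine (degree_mul_le _ _).trans ?_
  calc (C u - C v * X : Polynomial ℝ).degree + p.degree ≤ 1 + (k : WithBot ℕ) :=
        add_le_add (lin_deg_le u v) hp
    _ = ((k + 1 : ℕ) : WithBot ℕ) := by push_cast; ring

lemma step_lemma (ga' a' be' : ℝ) (hga' : 0 < ga') (ha' : 0 < a') (k : ℕ)
    (junk q pm : Polynomial ℝ)
    (hj : junk.degree < ((k + 1 : ℕ) : WithBot ℕ))
    (hqd : q.degree = k) (hql : 0 < q.leadingCoeff)
    (heq : junk + (C be' - C a' * X) * q + C ga' * pm = 0) :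
    pm.degree = ((k + 1 : ℕ) : WithBot ℕ) ∧ 0 < pm.leadingCoeff := by
  have hlin : (C be' - C a' * X : Polynomial ℝ) = C (-a') * X + C be' := by rw [map_neg]; ring
  have hld : (C be' - C a' * X : Polynomial ℝ).degree = 1 := by
    rw [hlin]; exact degree_linear (by linarith)
  have hll : (C be' - C a' * X : Polynomial ℝ).leadingCoeff = -a' := by
    rw [hlin]; exact leadingCoeff_linear (by linarith)
  have hprodd : ((C be' - C a' * X) * q).degree = ((k + 1 : ℕ) : WithBot ℕ) := by
    rw [degree_mul, hld, hqd]; push_cast; ring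
  have hprodl : ((C be' - C a' * X) * q).leadingCoeff = -a' * q.leadingCoeff := by
    rw [leadingCoeff_mul, hll]
  have hjlt : junk.degree < ((C be' - C a' * X) * q).degree := by rw [hprodd]; exact hj
  have hsumd : (junk + (C be' - C a' * X) * q).degree = ((k + 1 : ℕ) : WithBot ℕ) := by
    rw [degree_add_eq_right_of_degree_lt hjlt, hprodd]
  have hsuml : (junk + (C be' - C a' * X) * q).leadingCoeff = -a' * q.leadingCoeff := by
    rw [add_comm, leadingCoeff_add_of_degree_lt' ?_, hprodl]
    · exact hjlt
  have hm : C ga' * pm = -(junk + (C be' - C a' * X) * q) := by linear_combination heq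
  have hdm : (C ga' * pm).degree = ((k + 1 : ℕ) : WithBot ℕ) := by
    rw [hm, degree_neg, hsumd]
  have hdeg : pm.degree = ((k + 1 : ℕ) : WithBot ℕ) := by
    rw [degree_mul, degree_C (ne_of_gt hga'), zero_add] at hdm
    exact hdm
  have hlc : ga' * pm.leadingCoeff = a' * q.leadingCoeff := by
    have h1 : (C ga' * pm).leadingCoeff = ga' * pm.leadingCoeff := by
      rw [leadingCoeff_mul, leadingCoeff_C]
    have h2 : (C ga' * pm).leadingCoeff = a' * q.leadingCoeff := by
      rw [hm, leadingCoeff_neg, hsuml]; ring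
    linarith
  refine ⟨hdeg, ?_⟩
  have hpos : 0 < a' * q.leadingCoeff := mul_pos ha' hql
  nlinarith

lemma qseq_conds (a b al be ga : ℕ → ℝ) (α β : ℝ) (hga : ∀ n, 0 < ga n) :
    PencilConds a b al be ga α β (qseq a b al be ga α β) := by
  refine ⟨rfl, rfl, ?_, ?_, ?_⟩
  · show _ + C (ga 0) * qseq a b al be ga α β 2 = 0
    rw [show qseq a b al be ga α β 2 = C ((ga 0)⁻¹) * (-((C (al 0) - C (b 0) * X) * qseq a b al be ga α β 0
        + (C (be 0) - C (a 0) * X) * qseq a b al be ga α β 1)) from rfl,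
      C_inv_cancel (ne_of_gt (hga 0))]
    ring
  · show _ + C (ga 1) * qseq a b al be ga α β 3 = 0
    rw [show qseq a b al be ga α β 3 = C ((ga 1)⁻¹) * (-((C (be 0) - C (a 0) * X) * qseq a b al be ga α β 0
        + (C (al 1) - C (b 1) * X) * qseq a b al be ga α β 1
        + (C (be 1) - C (a 1) * X) * qseq a b al be ga α β 2)) from rfl,
      C_inv_cancel (ne_of_gt (hga 1))]
    ring
  · intro n
    show _ + C (ga (n+2)) * qseq a b al be ga α β (n+4) = 0
    rw [show qseq a b al be ga α β (n+4) = C ((ga (n+2))⁻¹) * (-(C (ga n) * qseq a b al be ga α β n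
        + (C (be (n+1)) - C (a (n+1)) * X) * qseq a b al be ga α β (n+1)
        + (C (al (n+2)) - C (b (n+2)) * X) * qseq a b al be ga α β (n+2)
        + (C (be (n+2)) - C (a (n+2)) * X) * qseq a b al be ga α β (n+3))) from rfl,
      C_inv_cancel (ne_of_gt (hga (n+2)))]
    ring

lemma pencil_unique (a b al be ga : ℕ → ℝ) (α β : ℝ) (hga : ∀ n, 0 < ga n)
    (p : ℕ → Polynomial ℝ) (hp : PencilConds a b al be ga α β p) :
    p = qseq a b al be ga α β := by
  obtain ⟨h0, h1, h2, h3, hrec⟩ := hp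
  funext n
  induction n using Nat.strong_induction_on with
  | _ n ih =>
    have hc : ∀ m, (C (ga m) : Polynomial ℝ) ≠ 0 := fun m => by
      simpa using (ne_of_gt (hga m))
    match n with
    | 0 => exact h0
    | 1 => exact h1
    | 2 =>
      apply mul_left_cancel₀ (hc 0)
      rw [show qseq a b al be ga α β 2 = C ((ga 0)⁻¹) * (-((C (al 0) - C (b 0) * X) * qseq a b al be ga α β 0
          + (C (be 0) - C (a 0) * X) * qseq a b al be ga α β 1)) from rfl,
        C_inv_cancel (ne_of_gt (hga 0))]
      rw [← ih 0 (by norm_num), ← ih 1 (by norm_num)]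
      linear_combination h2
    | 3 =>
      apply mul_left_cancel₀ (hc 1)
      rw [show qseq a b al be ga α β 3 = C ((ga 1)⁻¹) * (-((C (be 0) - C (a 0) * X) * qseq a b al be ga α β 0
          + (C (al 1) - C (b 1) * X) * qseq a b al be ga α β 1
          + (C (be 1) - C (a 1) * X) * qseq a b al be ga α β 2)) from rfl,
        C_inv_cancel (ne_of_gt (hga 1))]
      rw [← ih 0 (by norm_num), ← ih 1 (by norm_num), ← ih 2 (by norm_num)]
      linear_combination h3
    | (m+4) =>
      apply mul_left_cancel₀ (hc (m+2))
      rw [show qseq a b al be ga α β (m+4) = C ((ga (m+2))⁻¹) * (-(C (ga m) * qseq a b al be ga α β m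
          + (C (be (m+1)) - C (a (m+1)) * X) * qseq a b al be ga α β (m+1)
          + (C (al (m+2)) - C (b (m+2)) * X) * qseq a b al be ga α β (m+2)
          + (C (be (m+2)) - C (a (m+2)) * X) * qseq a b al be ga α β (m+3))) from rfl,
        C_inv_cancel (ne_of_gt (hga (m+2)))]
      rw [← ih m (by omega), ← ih (m+1) (by omega), ← ih (m+2) (by omega), ← ih (m+3) (by omega)]
      linear_combination hrec m

lemma pencil_degrees (a b al be ga : ℕ → ℝ) (α β : ℝ)
    (ha : ∀ n, 0 < a n) (hga : ∀ n, 0 < ga n) (hα : 0 < α)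
    (p : ℕ → Polynomial ℝ) (hp : PencilConds a b al be ga α β p) :
    ∀ n : ℕ, (p n).degree = n ∧ 0 < (p n).leadingCoeff := by
  obtain ⟨h0, h1, h2, h3, hrec⟩ := hp
  intro n
  induction n using Nat.strong_induction_on with
  | _ n ih =>
    match n with
    | 0 => rw [h0]; simp
    | 1 =>
      rw [h1]
      constructor
      · exact degree_linear (ne_of_gt hα)
      · rw [leadingCoeff_linear (ne_of_gt hα)]; exact hα
    | 2 =>
      have hjd : ((C (al 0) - C (b 0) * X) * p 0).degree < ((2 : ℕ) : WithBot ℕ) := by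
        have := mul_lin_deg_le (al 0) (b 0) (p 0) 0 (le_of_eq (ih 0 (by norm_num)).1)
        exact lt_of_le_of_lt this (by exact_mod_cast Nat.lt_succ_self 1)
      exact step_lemma (ga 0) (a 0) (be 0) (hga 0) (ha 0) 1 _ _ _ hjd
        (ih 1 (by norm_num)).1 (ih 1 (by norm_num)).2 h2
    | 3 =>
      have hjd : ((C (be 0) - C (a 0) * X) * p 0 + (C (al 1) - C (b 1) * X) * p 1).degree
          < ((3 : ℕ) : WithBot ℕ) := by
        have e1 := mul_lin_deg_le (be 0) (a 0) (p 0) 0 (le_of_eq (ih 0 (by norm_num)).1)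
        have e2 := mul_lin_deg_le (al 1) (b 1) (p 1) 1 (le_of_eq (ih 1 (by norm_num)).1)
        refine lt_of_le_of_lt (degree_add_le _ _) ?_
        refine max_lt (lt_of_le_of_lt e1 ?_) (lt_of_le_of_lt e2 ?_)
        · exact_mod_cast (by norm_num : (1:ℕ) < 3)
        · exact_mod_cast (by norm_num : (2:ℕ) < 3)
      exact step_lemma (ga 1) (a 1) (be 1) (hga 1) (ha 1) 2 _ _ _ hjd
        (ih 2 (by norm_num)).1 (ih 2 (by norm_num)).2 h3
    | (m+4) =>
      have hjd : (C (ga m) * p m + (C (be (m+1)) - C (a (m+1)) * X) * p (m+1)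
          + (C (al (m+2)) - C (b (m+2)) * X) * p (m+2)).degree
          < ((m + 4 : ℕ) : WithBot ℕ) := by
        have e0 : (C (ga m) * p m).degree ≤ (m : WithBot ℕ) := by
          refine (degree_mul_le _ _).trans ?_
          rw [degree_C (ne_of_gt (hga m)), zero_add]
          exact le_of_eq (ih m (by omega)).1
        have e1 := mul_lin_deg_le (be (m+1)) (a (m+1)) (p (m+1)) (m+1)
          (le_of_eq (ih (m+1) (by omega)).1)
        have e2 := mul_lin_deg_le (al (m+2)) (b (m+2)) (p (m+2)) (m+2)
          (le_of_eq (ih (m+2) (by omega)).1)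
        refine lt_of_le_of_lt (degree_add_le _ _) (max_lt (lt_of_le_of_lt (degree_add_le _ _)
          (max_lt (lt_of_le_of_lt e0 ?_) (lt_of_le_of_lt e1 ?_))) (lt_of_le_of_lt e2 ?_))
        · exact_mod_cast (by omega : m < m + 4)
        · exact_mod_cast (by omega : m + 1 + 1 < m + 4)
        · exact_mod_cast (by omega : m + 2 + 1 < m + 4)
      have := step_lemma (ga (m+2)) (a (m+2)) (be (m+2)) (hga (m+2)) (ha (m+2)) (m+3) _ _ _
        (by exact_mod_cast hjd) (ih (m+3) (by omega)).1 (ih (m+3) (by omega)).2 (hrec m)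
      exact ⟨by exact_mod_cast this.1, this.2⟩

theorem pencil_recurrence_unique_solution
    (a b al be ga : ℕ → ℝ) (α β : ℝ)
    (ha : ∀ n, 0 < a n) (hga : ∀ n, 0 < ga n) (hα : 0 < α) :
    (∃! p : ℕ → Polynomial ℝ, PencilConds a b al be ga α β p) ∧
    (∀ p : ℕ → Polynomial ℝ, PencilConds a b al be ga α β p →
      ∀ n : ℕ, (p n).degree = n ∧ 0 < (p n).leadingCoeff) := by
  constructor
  · exact ⟨qseq a b al be ga α β, qseq_conds a b al be ga α β hga,
      fun p hp => pencil_unique a b al be ga α β hga p hp⟩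
  · exact fun p hp => pencil_degrees a b al be ga α β ha hga hα p hp
end

section
/- Let A be the associated operator of a Jacobi-type pencil Θ on l_{2,fin}, and define y_n := p_n(A)e₀. Then (y_n) satisfies γ_{n-2}y_{n-2} + β_{n-1}y_{n-1} - a_{n-1}Ay_{n-1} + α_n y_n - b_n A y_n + β_n y_{n+1} - a_n A y_{n+1} + γ_n y_{n+2} = 0 for all n ≥ 0 (with y_{-1} = y_{-2} = 0), and moreover y_0 = e₀ and y_1 = e₁. -/
open Polynomial

theorem y_recurrence_and_initial
    (a b al be ga : ℕ → ℝ) (α β : ℝ)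
    (ha : ∀ n, 0 < a n) (hga : ∀ n, 0 < ga n) (hα : 0 < α)
    (J3 J5 A : (ℕ →₀ ℂ) →ₗ[ℂ] (ℕ →₀ ℂ))
    (hJ3_0 : J3 (e 0) = (b 0 : ℂ) • e 0 + (a 0 : ℂ) • e 1)
    (hJ3 : ∀ n, J3 (e (n+1)) = (a n : ℂ) • e n + (b (n+1) : ℂ) • e (n+1) + (a (n+1) : ℂ) • e (n+2))
    (hJ5_0 : J5 (e 0) = (al 0 : ℂ) • e 0 + (be 0 : ℂ) • e 1 + (ga 0 : ℂ) • e 2)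
    (hJ5_1 : J5 (e 1) = (be 0 : ℂ) • e 0 + (al 1 : ℂ) • e 1 + (be 1 : ℂ) • e 2 + (ga 1 : ℂ) • e 3)
    (hJ5 : ∀ n, J5 (e (n+2)) = (ga n : ℂ) • e n + (be (n+1) : ℂ) • e (n+1)
      + (al (n+2) : ℂ) • e (n+2) + (be (n+2) : ℂ) • e (n+3) + (ga (n+2) : ℂ) • e (n+4))
    (hA0 : A (e 0) = (α : ℂ)⁻¹ • (e 1 - (β : ℂ) • e 0))
    (hA : ∀ n, A (J3 (e n)) = J5 (e n))
    (p : ℕ → Polynomial ℂ)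
    (hp0 : p 0 = 1) (hp1 : p 1 = C (α : ℂ) * X + C (β : ℂ))
    (hrec0 : (C (al 0 : ℂ) - C (b 0 : ℂ) * X) * p 0 + (C (be 0 : ℂ) - C (a 0 : ℂ) * X) * p 1
      + C (ga 0 : ℂ) * p 2 = 0)
    (hrec1 : (C (be 0 : ℂ) - C (a 0 : ℂ) * X) * p 0 + (C (al 1 : ℂ) - C (b 1 : ℂ) * X) * p 1
      + (C (be 1 : ℂ) - C (a 1 : ℂ) * X) * p 2 + C (ga 1 : ℂ) * p 3 = 0)
    (hrec : ∀ n, C (ga n : ℂ) * p n + (C (be (n+1) : ℂ) - C (a (n+1) : ℂ) * X) * p (n+1)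
      + (C (al (n+2) : ℂ) - C (b (n+2) : ℂ) * X) * p (n+2)
      + (C (be (n+2) : ℂ) - C (a (n+2) : ℂ) * X) * p (n+3) + C (ga (n+2) : ℂ) * p (n+4) = 0)
    (y : ℕ → (ℕ →₀ ℂ))
    (hy : ∀ n, y n = (aeval A (p n)) (e 0))
    :
    y 0 = e 0 ∧ y 1 = e 1 ∧
    ((al 0 : ℂ) • y 0 - (b 0 : ℂ) • A (y 0) + (be 0 : ℂ) • y 1 - (a 0 : ℂ) • A (y 1)
      + (ga 0 : ℂ) • y 2 = 0) ∧
    ((be 0 : ℂ) • y 0 - (a 0 : ℂ) • A (y 0) + (al 1 : ℂ) • y 1 - (b 1 : ℂ) • A (y 1)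
      + (be 1 : ℂ) • y 2 - (a 1 : ℂ) • A (y 2) + (ga 1 : ℂ) • y 3 = 0) ∧
    (∀ n, (ga n : ℂ) • y n + (be (n+1) : ℂ) • y (n+1) - (a (n+1) : ℂ) • A (y (n+1))
      + (al (n+2) : ℂ) • y (n+2) - (b (n+2) : ℂ) • A (y (n+2))
      + (be (n+2) : ℂ) • y (n+3) - (a (n+2) : ℂ) • A (y (n+3))
      + (ga (n+2) : ℂ) • y (n+4) = 0) := by
  have key : ∀ (q : Polynomial ℂ) (c d : ℂ),
      (aeval A ((C c - C d * X) * q)) (e 0)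
        = c • (aeval A q) (e 0) - d • A ((aeval A q) (e 0)) := by
    intro q c d
    simp [map_mul, map_sub, aeval_C, Module.algebraMap_end_apply, Module.End.mul_apply,
      sub_smul, LinearMap.sub_apply, LinearMap.smul_apply, smul_sub]
  have keyC : ∀ (q : Polynomial ℂ) (c : ℂ),
      (aeval A (C c * q)) (e 0) = c • (aeval A q) (e 0) := by
    intro q c
    simp [map_mul, aeval_C, Module.algebraMap_end_apply]
  have hy0 : y 0 = e 0 := by simp [hy, hp0]
  have hy1 : y 1 = e 1 := by
    have hαC : (α : ℂ) ≠ 0 := by exact_mod_cast hα.ne'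
    rw [hy, hp1]
    simp [map_add, map_mul, aeval_C, Module.algebraMap_end_apply, hA0, smul_smul,
      mul_inv_cancel₀ hαC, smul_sub]
  refine ⟨hy0, hy1, ?_, ?_, ?_⟩
  · have h := congrArg (fun q => (aeval A q) (e 0)) hrec0
    simp only [map_add, map_zero, LinearMap.add_apply, LinearMap.zero_apply, key, keyC] at h
    simp only [hy]
    linear_combination (norm := module) h
  · have h := congrArg (fun q => (aeval A q) (e 0)) hrec1
    simp only [map_add, map_zero, LinearMap.add_apply, LinearMap.zero_apply, key, keyC] at h
    simp only [hy]
    linear_combination (norm := module) h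
  · intro n
    have h := congrArg (fun q => (aeval A q) (e 0)) (hrec n)
    simp only [map_add, map_zero, LinearMap.add_apply, LinearMap.zero_apply, key, keyC] at h
    simp only [hy]
    linear_combination (norm := module) h
end
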